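/- For any two finite graphs G₁ and G₂, the pathwidth of their join satisfies pw(G₁ ⊗ G₂) = min(pw(G₁) + |V(G₂)|, pw(G₂) + |V(G₁)|). -/

import Mathlib

open SimpleGraph

/-- A path decomposition of a graph `G`: a finite sequence of bags covering all
vertices and edges, in which each vertex occurs in a consecutive set of bags. -/
structure PathDecomp {V : Type*} (G : SimpleGraph V) where
  n : ℕ
  bag : Fin n → Finset V
  mem_bag : ∀ v : V, ∃ i, v ∈ bag i
  adj_bag : ∀ u v : V, G.Adj u v → ∃ i, u ∈ bag i ∧ v ∈ bag i
  convex : ∀ v : V, ∀ i j l : Fin n, i ≤ j → j ≤ l → v ∈ bag i → v ∈ bag l → v ∈ bag j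

/-- The width of a path decomposition: maximum bag size minus one. -/
def PathDecomp.width {V : Type*} {G : SimpleGraph V} (P : PathDecomp G) : ℕ :=
  (Finset.univ.sup fun i => (P.bag i).card) - 1

/-- Pathwidth: the minimum width over all path decompositions. -/
noncomputable def pathwidth {V : Type*} (G : SimpleGraph V) : ℕ :=
  sInf {w | ∃ P : PathDecomp G, P.width = w}


/-- The join of two vertex-disjoint graphs: all edges of each graph, plus all
edges between the two vertex sets. -/
def graphJoin {V₁ V₂ : Type*} (G₁ : SimpleGraph V₁) (G₂ : SimpleGraph V₂) :
    SimpleGraph (V₁ ⊕ V₂) :=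
  SimpleGraph.fromRel fun x y =>
    (∃ a b, x = Sum.inl a ∧ y = Sum.inl b ∧ G₁.Adj a b) ∨
    (∃ a b, x = Sum.inr a ∧ y = Sum.inr b ∧ G₂.Adj a b) ∨
    (x.isLeft ∧ y.isRight)


/-!
For the upper bound, add all of `V₂` to every bag of an optimal decomposition of `G₁`, or
symmetrically. For the lower bound, take a decomposition of the join and, for each vertex, the
interval of indices of the bags containing it. Every interval of a vertex of `V₁` meets every
interval of a vertex of `V₂`, so the intervals of one side, say `V₂`, have a common part `[a, b]`
that meets all intervals of the other side (if two intervals of `V₂` were disjoint, every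
interval of `V₁` would contain the gap between them). Projecting the bag indices onto `[a, b]`
and forgetting `V₂` gives a decomposition of `G₁` each of whose bags fits, together with all of
`V₂`, into a bag of the original decomposition.
-/

open Finset Function

section

variable {V W : Type*} {G : SimpleGraph V} {H : SimpleGraph W}

lemma Finset.card_preimage_add_card_le {s T : Finset V} {f : W → V} (hf : Injective f)
    (hTs : T ⊆ s) (hTf : ∀ w, f w ∉ T) : (s.preimage f hf.injOn).card + T.card ≤ s.card := by
  classical
  rw [card_preimage, ← card_filter_add_card_filter_not (· ∈ Set.range f) (s := s)]
  refine Nat.add_le_add_left (card_le_card fun v hv => mem_filter.2 ⟨hTs hv, ?_⟩) _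
  rintro ⟨w, rfl⟩
  exact hTf w hv

/-- Helly's theorem on a line, for two families of intervals `[l i, h i]` each meeting every
interval of the other family. -/
lemma exists_Icc_of_forall_le {α ι κ : Type*} [LinearOrder α] [Fintype ι] [Nonempty ι]
    [Fintype κ] [Nonempty κ] {l₁ h₁ : ι → α} {l₂ h₂ : κ → α}
    (h₁₂ : ∀ i k, l₁ i ≤ h₂ k) (h₂₁ : ∀ i k, l₂ k ≤ h₁ i) :
    (∃ a b, a ≤ b ∧ (∀ k, l₂ k ≤ a ∧ b ≤ h₂ k) ∧ ∀ i, l₁ i ≤ b ∧ a ≤ h₁ i) ∨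
      (∃ a b, a ≤ b ∧ (∀ i, l₁ i ≤ a ∧ b ≤ h₁ i) ∧ ∀ k, l₂ k ≤ b ∧ a ≤ h₂ k) := by
  set a₁ := univ.sup' univ_nonempty l₁
  set b₁ := univ.inf' univ_nonempty h₁
  set a₂ := univ.sup' univ_nonempty l₂
  set b₂ := univ.inf' univ_nonempty h₂
  have ha₁b₂ : a₁ ≤ b₂ := sup'_le _ _ fun i _ => le_inf' _ _ fun k _ => h₁₂ i k
  have ha₂b₁ : a₂ ≤ b₁ := sup'_le _ _ fun k _ => le_inf' _ _ fun i _ => h₂₁ i k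
  have hl₁ i : l₁ i ≤ a₁ := le_sup' l₁ (mem_univ i)
  have hh₁ i : b₁ ≤ h₁ i := inf'_le h₁ (mem_univ i)
  have hl₂ k : l₂ k ≤ a₂ := le_sup' l₂ (mem_univ k)
  have hh₂ k : b₂ ≤ h₂ k := inf'_le h₂ (mem_univ k)
  rcases le_or_gt a₂ b₂ with h | h
  · exact .inl ⟨a₂, b₂, h, fun k => ⟨hl₂ k, hh₂ k⟩,
      fun i => ⟨(hl₁ i).trans ha₁b₂, ha₂b₁.trans (hh₁ i)⟩⟩
  · exact .inr ⟨a₁, b₁, ha₁b₂.trans (h.le.trans ha₂b₁), fun i => ⟨hl₁ i, hh₁ i⟩,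
      fun k => ⟨(hl₂ k).trans ha₂b₁, ha₁b₂.trans (hh₂ k)⟩⟩

namespace PathDecomp

variable (P : PathDecomp G)

noncomputable def supp (v : V) : Finset (Fin P.n) := by
  classical exact univ.filter (v ∈ P.bag ·)

lemma mem_supp {v : V} {i : Fin P.n} : i ∈ P.supp v ↔ v ∈ P.bag i := by
  simp [supp]

lemma supp_nonempty (v : V) : (P.supp v).Nonempty :=
  let ⟨i, hi⟩ := P.mem_bag v
  ⟨i, P.mem_supp.2 hi⟩

noncomputable def lo (v : V) : Fin P.n := (P.supp v).min' (P.supp_nonempty v)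

noncomputable def hi (v : V) : Fin P.n := (P.supp v).max' (P.supp_nonempty v)

lemma lo_le {v : V} {i : Fin P.n} (h : v ∈ P.bag i) : P.lo v ≤ i :=
  min'_le _ _ (P.mem_supp.2 h)

lemma le_hi {v : V} {i : Fin P.n} (h : v ∈ P.bag i) : i ≤ P.hi v :=
  le_max' _ _ (P.mem_supp.2 h)

lemma lo_mem (v : V) : v ∈ P.bag (P.lo v) := P.mem_supp.1 (min'_mem _ _)

lemma hi_mem (v : V) : v ∈ P.bag (P.hi v) := P.mem_supp.1 (max'_mem _ _)

lemma mem_bag_of_lo_le_of_le_hi {v : V} {i : Fin P.n} (h₁ : P.lo v ≤ i) (h₂ : i ≤ P.hi v) :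
    v ∈ P.bag i :=
  P.convex v _ i _ h₁ h₂ (P.lo_mem v) (P.hi_mem v)

lemma exists_mem_bag_Icc_of_lo_le_of_le_hi {v : V} {a b : Fin P.n} (hab : a ≤ b)
    (h₁ : P.lo v ≤ b) (h₂ : a ≤ P.hi v) : ∃ j ∈ Set.Icc a b, v ∈ P.bag j :=
  ⟨max a (P.lo v), ⟨le_max_left _ _, max_le hab h₁⟩,
    P.mem_bag_of_lo_le_of_le_hi (le_max_right _ _) (max_le h₂ (P.lo_le (P.hi_mem v)))⟩

lemma lo_le_hi_of_adj {u v : V} (h : G.Adj u v) : P.lo u ≤ P.hi v :=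
  let ⟨_, hu, hv⟩ := P.adj_bag u v h
  (P.lo_le hu).trans (P.le_hi hv)

noncomputable def comap (f : Copy H G) : PathDecomp H where
  n := P.n
  bag i := (P.bag i).preimage f f.injective.injOn
  mem_bag w := let ⟨i, hi⟩ := P.mem_bag (f w); ⟨i, mem_preimage.2 hi⟩
  adj_bag _ _ h :=
    let ⟨i, hu, hv⟩ := P.adj_bag _ _ (f.toHom.map_adj h)
    ⟨i, mem_preimage.2 hu, mem_preimage.2 hv⟩
  convex w i j l hij hjl hi hl := mem_preimage.2 <|
    P.convex (f w) i j l hij hjl (mem_preimage.1 hi) (mem_preimage.1 hl)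

@[simp] lemma mem_comap_bag {f : Copy H G} {w : W} {i : Fin P.n} :
    w ∈ (P.comap f).bag i ↔ f w ∈ P.bag i :=
  mem_preimage (hf := f.injective.injOn)

lemma card_comap_bag_le (f : Copy H G) (i : Fin P.n) :
    ((P.comap f).bag i).card ≤ (P.bag i).card :=
  card_le_card_of_injOn (s := (P.bag i).preimage f f.injective.injOn) f
    (fun _ hw => mem_preimage.1 hw) f.injective.injOn

lemma mem_bag_projIcc {v : V} {a b q j : Fin P.n} (hab : a ≤ b) (hq : v ∈ P.bag q)
    (hj : j ∈ Set.Icc a b) (hv : v ∈ P.bag j) : v ∈ P.bag (Set.projIcc a b hab q) := by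
  rcases le_total q a with hqa | haq
  · rw [Set.projIcc_of_le_left hab hqa]
    exact P.convex v q a j hqa hj.1 hq hv
  rcases le_total b q with hbq | hqb
  · rw [Set.projIcc_of_right_le hab hbq]
    exact P.convex v j b q hj.2 hbq hv hq
  · rwa [Set.projIcc_of_mem hab ⟨haq, hqb⟩]

def projIcc {a b : Fin P.n} (hab : a ≤ b) (hmeet : ∀ v, ∃ j ∈ Set.Icc a b, v ∈ P.bag j) :
    PathDecomp G where
  n := P.n
  bag i := P.bag (Set.projIcc a b hab i)
  mem_bag v :=
    let ⟨j, hj, hv⟩ := hmeet v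
    ⟨j, by rwa [Set.projIcc_of_mem hab hj]⟩
  adj_bag u v h :=
    let ⟨q, hu, hv⟩ := P.adj_bag u v h
    let ⟨j, hj, hu'⟩ := hmeet u
    let ⟨k, hk, hv'⟩ := hmeet v
    ⟨q, P.mem_bag_projIcc hab hu hj hu', P.mem_bag_projIcc hab hv hk hv'⟩
  convex v _ _ _ hij hjl hi hl :=
    P.convex v _ _ _ (Set.monotone_projIcc hab hij) (Set.monotone_projIcc hab hjl) hi hl

def single [Fintype V] (G : SimpleGraph V) : PathDecomp G where
  n := 1
  bag _ := univ
  mem_bag v := ⟨0, mem_univ v⟩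
  adj_bag u v _ := ⟨0, mem_univ u, mem_univ v⟩
  convex v _ _ _ _ _ _ _ := mem_univ v

lemma width_single [Fintype V] (G : SimpleGraph V) :
    (single G).width = Fintype.card V - 1 := by
  show (univ.sup fun _ : Fin 1 => (univ : Finset V).card) - 1 = _
  rw [sup_const univ_nonempty, card_univ]

lemma width_le_width_add {P : PathDecomp G} {Q : PathDecomp H} (k : ℕ)
    (h : ∀ i, ∃ j, (P.bag i).card ≤ (Q.bag j).card + k) : P.width ≤ Q.width + k := by
  have hsup : (univ.sup fun i => (P.bag i).card) ≤ (univ.sup fun j => (Q.bag j).card) + k :=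
    Finset.sup_le fun i _ =>
      let ⟨j, hj⟩ := h i
      hj.trans (Nat.add_le_add_right (le_sup (f := fun j => (Q.bag j).card) (mem_univ j)) k)
  unfold width
  omega

/-- `width` subtracts one with truncation, hence the nonempty bag needed on the left. -/
lemma width_add_le_width [Nonempty V] {P : PathDecomp G} {Q : PathDecomp H} (k : ℕ)
    (h : ∀ i, ∃ j, (P.bag i).card + k ≤ (Q.bag j).card) : P.width + k ≤ Q.width := by
  obtain ⟨i, hi⟩ := P.mem_bag (Classical.arbitrary V)
  obtain ⟨i₀, -, hi₀⟩ := exists_mem_eq_sup univ ⟨i, mem_univ i⟩ fun i => (P.bag i).card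
  obtain ⟨j, hj⟩ := h i₀
  have hpos : 0 < (P.bag i).card := card_pos.2 ⟨_, hi⟩
  have hi_le : (P.bag i).card ≤ (P.bag i₀).card :=
    hi₀ ▸ le_sup (f := fun i => (P.bag i).card) (mem_univ i)
  have hj_le : (Q.bag j).card ≤ univ.sup fun j => (Q.bag j).card :=
    le_sup (f := fun j => (Q.bag j).card) (mem_univ j)
  unfold width
  omega

lemma width_comap_le (P : PathDecomp G) (f : Copy H G) : (P.comap f).width ≤ P.width := by
  simpa using width_le_width_add (P := P.comap f) (Q := P) 0 fun i => ⟨i, P.card_comap_bag_le f i⟩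

end PathDecomp

lemma pathwidth_le_width (P : PathDecomp G) : pathwidth G ≤ P.width :=
  Nat.sInf_le ⟨P, rfl⟩

lemma exists_width_eq_pathwidth [Finite V] (G : SimpleGraph V) :
    ∃ P : PathDecomp G, P.width = pathwidth G := by
  have := Fintype.ofFinite V
  exact Nat.sInf_mem (s := {w | ∃ P : PathDecomp G, P.width = w}) ⟨_, PathDecomp.single G, rfl⟩

lemma pathwidth_le_card_sub_one [Fintype V] (G : SimpleGraph V) :
    pathwidth G ≤ Fintype.card V - 1 :=
  PathDecomp.width_single G ▸ pathwidth_le_width _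

lemma SimpleGraph.IsContained.pathwidth_le [Finite V] (h : H ⊑ G) :
    pathwidth H ≤ pathwidth G := by
  obtain ⟨f⟩ := h
  obtain ⟨P, hP⟩ := exists_width_eq_pathwidth G
  exact hP ▸ (pathwidth_le_width _).trans (P.width_comap_le f)

lemma SimpleGraph.Iso.pathwidth_eq [Finite V] (e : G ≃g H) : pathwidth G = pathwidth H :=
  have := Finite.of_equiv V e.toEquiv
  le_antisymm (IsContained.pathwidth_le ⟨e.toCopy⟩) (IsContained.pathwidth_le ⟨e.symm.toCopy⟩)

theorem PathDecomp.pathwidth_add_card_le_width [Nonempty W] (P : PathDecomp G) (f : Copy H G)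
    {T : Finset V} (hTf : ∀ w, f w ∉ T) {a b : Fin P.n} (hab : a ≤ b)
    (hT : ∀ v ∈ T, P.lo v ≤ a ∧ b ≤ P.hi v) (hf : ∀ w, P.lo (f w) ≤ b ∧ a ≤ P.hi (f w)) :
    pathwidth H + T.card ≤ P.width := by
  have hmeet (w : W) : ∃ j ∈ Set.Icc a b, w ∈ (P.comap f).bag j :=
    let ⟨j, hj, hw⟩ := P.exists_mem_bag_Icc_of_lo_le_of_le_hi hab (hf w).1 (hf w).2
    ⟨j, hj, P.mem_comap_bag.2 hw⟩
  have hT_mem (v : V) (hv : v ∈ T) (j : Set.Icc a b) : v ∈ P.bag j :=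
    P.mem_bag_of_lo_le_of_le_hi ((hT v hv).1.trans j.2.1) (j.2.2.trans (hT v hv).2)
  calc pathwidth H + T.card ≤ ((P.comap f).projIcc hab hmeet).width + T.card :=
        Nat.add_le_add_right (pathwidth_le_width _) _
    _ ≤ P.width := width_add_le_width _ fun i =>
        ⟨_, card_preimage_add_card_le f.injective (fun v hv => hT_mem v hv _) hTf⟩

section GraphJoin

variable {V₁ V₂ : Type*} {G₁ : SimpleGraph V₁} {G₂ : SimpleGraph V₂}

@[simp] lemma graphJoin_adj_inl_inl {x x' : V₁} :
    (graphJoin G₁ G₂).Adj (.inl x) (.inl x') ↔ G₁.Adj x x' := by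
  simp [graphJoin, fromRel_adj, G₁.adj_comm x', and_iff_right_of_imp Adj.ne]

@[simp] lemma graphJoin_adj_inr_inr {y y' : V₂} :
    (graphJoin G₁ G₂).Adj (.inr y) (.inr y') ↔ G₂.Adj y y' := by
  simp [graphJoin, fromRel_adj, G₂.adj_comm y', and_iff_right_of_imp Adj.ne]

@[simp] lemma graphJoin_adj_inl_inr (x : V₁) (y : V₂) :
    (graphJoin G₁ G₂).Adj (.inl x) (.inr y) := by
  simp [graphJoin, fromRel_adj]

@[simp] lemma graphJoin_adj_inr_inl (y : V₂) (x : V₁) :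
    (graphJoin G₁ G₂).Adj (.inr y) (.inl x) :=
  (graphJoin_adj_inl_inr x y).symm

variable (G₁ G₂)

def graphJoinComm : graphJoin G₁ G₂ ≃g graphJoin G₂ G₁ :=
  ⟨Equiv.sumComm V₁ V₂, by rintro (x | y) (x' | y') <;> simp⟩

def graphJoinInl : G₁ ↪g graphJoin G₁ G₂ :=
  ⟨Function.Embedding.inl, graphJoin_adj_inl_inl⟩

def graphJoinInr : G₂ ↪g graphJoin G₁ G₂ :=
  ⟨Function.Embedding.inr, graphJoin_adj_inr_inr⟩

@[simp] lemma graphJoinInl_apply (x : V₁) : graphJoinInl G₁ G₂ x = .inl x := rfl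

@[simp] lemma graphJoinInr_apply (y : V₂) : graphJoinInr G₁ G₂ y = .inr y := rfl

end GraphJoin

namespace PathDecomp

variable {V₁ V₂ : Type*} {G₁ : SimpleGraph V₁}

def joinRight [Nonempty V₁] [Fintype V₂] (Q : PathDecomp G₁) (G₂ : SimpleGraph V₂) :
    PathDecomp (graphJoin G₁ G₂) where
  n := Q.n
  bag i := (Q.bag i).disjSum univ
  mem_bag
    | .inl x => let ⟨i, hi⟩ := Q.mem_bag x; ⟨i, inl_mem_disjSum.2 hi⟩
    | .inr y =>
      let ⟨i, _⟩ := Q.mem_bag (Classical.arbitrary V₁)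
      ⟨i, inr_mem_disjSum.2 (mem_univ y)⟩
  adj_bag := by
    rintro (x | y) (x' | y') h
    · obtain ⟨i, hx, hx'⟩ := Q.adj_bag x x' (graphJoin_adj_inl_inl.1 h)
      exact ⟨i, inl_mem_disjSum.2 hx, inl_mem_disjSum.2 hx'⟩
    · obtain ⟨i, hx⟩ := Q.mem_bag x
      exact ⟨i, inl_mem_disjSum.2 hx, inr_mem_disjSum.2 (mem_univ y')⟩
    · obtain ⟨i, hx'⟩ := Q.mem_bag x'
      exact ⟨i, inr_mem_disjSum.2 (mem_univ y), inl_mem_disjSum.2 hx'⟩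
    · obtain ⟨i, -⟩ := Q.mem_bag (Classical.arbitrary V₁)
      exact ⟨i, inr_mem_disjSum.2 (mem_univ y), inr_mem_disjSum.2 (mem_univ y')⟩
  convex := by
    rintro (x | y) i j l hij hjl hi hl
    · exact inl_mem_disjSum.2 (Q.convex x i j l hij hjl (inl_mem_disjSum.1 hi)
        (inl_mem_disjSum.1 hl))
    · exact inr_mem_disjSum.2 (mem_univ y)

lemma width_joinRight_le [Nonempty V₁] [Fintype V₂] (Q : PathDecomp G₁)
    (G₂ : SimpleGraph V₂) : (Q.joinRight G₂).width ≤ Q.width + Fintype.card V₂ :=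
  width_le_width_add _ fun i => ⟨i, (card_disjSum _ _).le⟩

end PathDecomp

section GraphJoinPathwidth

variable {V₁ V₂ : Type*} [Fintype V₁] [Fintype V₂] (G₁ : SimpleGraph V₁) (G₂ : SimpleGraph V₂)

lemma pathwidth_graphJoin_le_left :
    pathwidth (graphJoin G₁ G₂) ≤ pathwidth G₁ + Fintype.card V₂ := by
  rcases isEmpty_or_nonempty V₁ with hV₁ | hV₁
  · calc pathwidth (graphJoin G₁ G₂) ≤ Fintype.card (V₁ ⊕ V₂) - 1 := pathwidth_le_card_sub_one _
      _ ≤ pathwidth G₁ + Fintype.card V₂ := by simp; omega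
  · obtain ⟨Q, hQ⟩ := exists_width_eq_pathwidth G₁
    exact hQ ▸ (pathwidth_le_width _).trans (Q.width_joinRight_le G₂)

lemma pathwidth_graphJoin_le_right :
    pathwidth (graphJoin G₁ G₂) ≤ pathwidth G₂ + Fintype.card V₁ :=
  (graphJoinComm G₁ G₂).pathwidth_eq ▸ pathwidth_graphJoin_le_left G₂ G₁

variable {G₁ G₂} in
lemma PathDecomp.min_le_width [Nonempty V₁] [Nonempty V₂] (P : PathDecomp (graphJoin G₁ G₂)) :
    min (pathwidth G₁ + Fintype.card V₂) (pathwidth G₂ + Fintype.card V₁) ≤ P.width := by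
  rcases exists_Icc_of_forall_le (l₁ := fun x => P.lo (.inl x)) (h₁ := fun x => P.hi (.inl x))
    (l₂ := fun y => P.lo (.inr y)) (h₂ := fun y => P.hi (.inr y))
    (fun x y => P.lo_le_hi_of_adj (graphJoin_adj_inl_inr x y))
    (fun x y => P.lo_le_hi_of_adj (graphJoin_adj_inr_inl y x))
    with ⟨a, b, hab, h₂, h₁⟩ | ⟨a, b, hab, h₁, h₂⟩
  · refine (min_le_left _ _).trans ?_
    simpa using P.pathwidth_add_card_le_width (graphJoinInl G₁ G₂).toCopy
      (T := univ.map Function.Embedding.inr) (by simp) hab (by simpa using h₂) h₁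
  · refine (min_le_right _ _).trans ?_
    simpa using P.pathwidth_add_card_le_width (graphJoinInr G₁ G₂).toCopy
      (T := univ.map Function.Embedding.inl) (by simp) hab (by simpa using h₁) h₂

end GraphJoinPathwidth

end

/-- `pw(G₁ ⊗ G₂) = min(pw(G₁) + |V(G₂)|, pw(G₂) + |V(G₁)|)`. -/
theorem pathwidth_join {V₁ V₂ : Type*} [Fintype V₁] [Fintype V₂]
    (G₁ : SimpleGraph V₁) (G₂ : SimpleGraph V₂) :
    pathwidth (graphJoin G₁ G₂) =
      min (pathwidth G₁ + Fintype.card V₂) (pathwidth G₂ + Fintype.card V₁) := by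
  refine le_antisymm (le_min (pathwidth_graphJoin_le_left G₁ G₂)
    (pathwidth_graphJoin_le_right G₁ G₂)) ?_
  rcases isEmpty_or_nonempty V₁ with hV₁ | hV₁
  · calc _ ≤ pathwidth G₂ + Fintype.card V₁ := min_le_right _ _
      _ = pathwidth G₂ := by simp
      _ ≤ _ := IsContained.pathwidth_le ⟨(graphJoinInr G₁ G₂).toCopy⟩
  rcases isEmpty_or_nonempty V₂ with hV₂ | hV₂
  · calc _ ≤ pathwidth G₁ + Fintype.card V₂ := min_le_left _ _
      _ = pathwidth G₁ := by simp
      _ ≤ _ := IsContained.pathwidth_le ⟨(graphJoinInl G₁ G₂).toCopy⟩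
  obtain ⟨P, hP⟩ := exists_width_eq_pathwidth (graphJoin G₁ G₂)
  exact hP ▸ P.min_le_width
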